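/- arXiv:2212.11666 — 3 statements merged into one kernel-verified Lean document; each statement's English description precedes it below -/
import Mathlib

section
/- Let W and V be channels from finite set X to finite set Y, and ε ∈ (0,1). Then for any pmf p on X, D_{s+}^ε(p·W ‖ p·V) ≤ max_{x ∈ supp(p)} D_{s+}^ε(W(·|x) ‖ V(·|x)). -/
open scoped BigOperators

noncomputable section

/-- A probability mass function on a finite type. -/
def IsPMF {α : Type*} [Fintype α] (p : α → ℝ) : Prop :=
  (∀ a, 0 ≤ p a) ∧ ∑ a, p a = 1

/-- Max-relative entropy (base 2). -/
noncomputable def Dmax {α : Type*} [Fintype α] [Nonempty α] (p q : α → ℝ) : ℝ :=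
  Real.logb 2 (⨆ a, p a / q a)

open Classical in
/-- Information spectrum divergence `D_{s+}^ε(p‖q)`. -/
noncomputable def Ds {α : Type*} [Fintype α] (ε : ℝ) (p q : α → ℝ) : ℝ :=
  sInf {a : ℝ | 0 ≤ a ∧
    (∑ w, if a < Real.logb 2 (p w / q w) then p w else 0) ≤ ε}

/-- Total variation distance. -/
noncomputable def TV {α : Type*} [Fintype α] (p q : α → ℝ) : ℝ :=
  (∑ a, |p a - q a|) / 2

open Classical in
lemma key_sum_le {Y : Type*} [Fintype Y] (w c : Y → ℝ) (hw : ∀ y, 0 ≤ w y)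
    {ε M : ℝ} (hε : 0 < ε) (hM0 : 0 ≤ M)
    (hM : sInf {a : ℝ | 0 ≤ a ∧ (∑ y, if a < c y then w y else 0) ≤ ε} ≤ M) :
    (∑ y, if M < c y then w y else 0) ≤ ε := by
  by_contra hcon
  push_neg at hcon
  set S := {a : ℝ | 0 ≤ a ∧ (∑ y, if a < c y then w y else 0) ≤ ε} with hS
  set T : Finset Y := Finset.univ.filter (fun y => M < c y) with hT
  have hTne : T.Nonempty := by
    by_contra h
    rw [Finset.not_nonempty_iff_eq_empty] at h
    have : (∑ y, if M < c y then w y else 0) = 0 := by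
      apply Finset.sum_eq_zero
      intro y _
      have : y ∉ T := by rw [h]; exact Finset.notMem_empty y
      rw [hT, Finset.mem_filter] at this
      simp only [Finset.mem_univ, true_and] at this
      simp [this]
    linarith
  set t : ℝ := T.inf' hTne c with ht
  have hMt : M < t := by
    rw [ht, Finset.lt_inf'_iff]
    intro y hy
    rw [hT, Finset.mem_filter] at hy
    exact hy.2
  have hSub : ∀ b ∈ S, t ≤ b := by
    intro b hb
    by_contra hbt
    push_neg at hbt
    have hmono : (∑ y, if M < c y then w y else 0) ≤ ∑ y, if b < c y then w y else 0 := by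
      apply Finset.sum_le_sum
      intro y _
      by_cases hy : M < c y
      · have hyT : y ∈ T := by rw [hT, Finset.mem_filter]; exact ⟨Finset.mem_univ y, hy⟩
        have : t ≤ c y := Finset.inf'_le c hyT
        rw [if_pos hy, if_pos (lt_of_lt_of_le hbt this)]
      · rw [if_neg hy]
        split_ifs with h
        · exact hw y
        · exact le_refl 0
    have := hb.2
    linarith
  have hSne : S.Nonempty := by
    obtain ⟨y0, hy0⟩ := hTne
    refine ⟨(Finset.univ.sup' ⟨y0, Finset.mem_univ y0⟩ c) ⊔ 0, ?_, ?_⟩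
    · exact le_max_right _ _
    · have : (∑ y, if (Finset.univ.sup' ⟨y0, Finset.mem_univ y0⟩ c) ⊔ 0 < c y then w y else 0) = 0 := by
        apply Finset.sum_eq_zero
        intro y _
        have h1 : c y ≤ Finset.univ.sup' ⟨y0, Finset.mem_univ y0⟩ c :=
          Finset.le_sup' c (Finset.mem_univ y)
        rw [if_neg (not_lt.mpr (le_trans h1 (le_max_left _ _)))]
      rw [this]; exact le_of_lt hε
  have : t ≤ sInf S := le_csInf hSne hSub
  linarith

/-- Quasi-convexity of the information spectrum divergence in the input
distribution: for any pmf `p`,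
`D_{s+}^ε(p·W ‖ p·V) ≤ max_{x ∈ supp(p)} D_{s+}^ε(W(·|x) ‖ V(·|x))`. -/
theorem ds_quasi_convex_in_input
    {X Y : Type*} [Fintype X] [Fintype Y] [Nonempty X] [Nonempty Y]
    (W V : X → Y → ℝ) (hW : ∀ x, IsPMF (W x)) (hV : ∀ x, IsPMF (V x))
    (ε : ℝ) (hε : ε ∈ Set.Ioo (0:ℝ) 1)
    (p : X → ℝ) (hp : IsPMF p) :
    Ds ε (fun z : X × Y => p z.1 * W z.1 z.2) (fun z => p z.1 * V z.1 z.2) ≤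
      ⨆ x : {x : X // 0 < p x}, Ds ε (W x.1) (V x.1) := by
  classical
  obtain ⟨hε0, hε1⟩ := hε
  have hx0 : ∃ x, 0 < p x := by
    by_contra h
    push_neg at h
    have : ∑ a, p a = 0 := Finset.sum_eq_zero fun a _ => le_antisymm (h a) (hp.1 a)
    rw [hp.2] at this
    norm_num at this
  haveI : Nonempty {x : X // 0 < p x} := ⟨⟨hx0.choose, hx0.choose_spec⟩⟩
  set M := ⨆ x : {x : X // 0 < p x}, Ds ε (W x.1) (V x.1) with hMdef
  have hbdd : BddAbove (Set.range fun x : {x : X // 0 < p x} => Ds ε (W x.1) (V x.1)) :=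
    (Set.finite_range _).bddAbove
  have hDs_nonneg : ∀ x : X, 0 ≤ Ds ε (W x) (V x) := fun x =>
    Real.sInf_nonneg fun a ha => ha.1
  have hM0 : 0 ≤ M :=
    le_trans (hDs_nonneg _) (le_ciSup hbdd (Classical.arbitrary {x : X // 0 < p x}))
  have hle : ∀ x, 0 < p x → Ds ε (W x) (V x) ≤ M := fun x hx => le_ciSup hbdd ⟨x, hx⟩
  show Ds _ _ _ ≤ M
  unfold Ds
  apply csInf_le ⟨0, fun a ha => ha.1⟩
  refine ⟨hM0, ?_⟩
  rw [Fintype.sum_prod_type]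
  have hxbound : ∀ x : X,
      (∑ y, if M < Real.logb 2 (p x * W x y / (p x * V x y)) then p x * W x y else 0)
        ≤ p x * ε := by
    intro x
    rcases eq_or_lt_of_le (hp.1 x) with h0 | h0
    · simp [← h0]
    · have hsimp : ∀ y, p x * W x y / (p x * V x y) = W x y / V x y := fun y =>
        mul_div_mul_left _ _ (ne_of_gt h0)
      have hkey : (∑ y, if M < Real.logb 2 (W x y / V x y) then W x y else 0) ≤ ε :=
        key_sum_le (W x) _ (fun y => (hW x).1 y) hε0 hM0 (hle x h0)
      calc (∑ y, if M < Real.logb 2 (p x * W x y / (p x * V x y)) then p x * W x y else 0)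
          = p x * ∑ y, if M < Real.logb 2 (W x y / V x y) then W x y else 0 := by
            rw [Finset.mul_sum]
            refine Finset.sum_congr rfl fun y _ => ?_
            rw [hsimp y]
            split_ifs <;> simp
        _ ≤ p x * ε := mul_le_mul_of_nonneg_left hkey (le_of_lt h0)
  calc (∑ x, ∑ y, if M < Real.logb 2 (p x * W x y / (p x * V x y)) then p x * W x y else 0)
      ≤ ∑ x, p x * ε := Finset.sum_le_sum fun x _ => hxbound x
    _ = ε := by rw [← Finset.sum_mul, hp.2, one_mul]
end
end

section
/- For a channel W from finite X to finite Y and any pmf q on Y, sup over pmfs p on X of D_{s+}^ε(p·W ‖ p × q) = max_{x ∈ X} D_{s+}^ε(W(·|x) ‖ q). -/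
open scoped BigOperators

noncomputable section

open Classical in
def Sset {α : Type*} [Fintype α] (ε : ℝ) (p q : α → ℝ) : Set ℝ :=
  {a : ℝ | 0 ≤ a ∧
    (∑ w, if a < Real.logb 2 (p w / q w) then p w else 0) ≤ ε}

lemma Ds_eq_sInf {α : Type*} [Fintype α] (ε : ℝ) (p q : α → ℝ) :
    Ds ε p q = sInf (Sset ε p q) := rfl

open Classical in
lemma mem_Sset {α : Type*} [Fintype α] {ε : ℝ} {p q : α → ℝ} {a : ℝ} :
    a ∈ Sset ε p q ↔ 0 ≤ a ∧
      (∑ w, if a < Real.logb 2 (p w / q w) then p w else 0) ≤ ε := Iff.rfl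

lemma Sset_nonempty {α : Type*} [Fintype α] [Nonempty α] {ε : ℝ} (hε : 0 < ε)
    (p q : α → ℝ) : (Sset ε p q).Nonempty := by
  classical
  refine ⟨max 0 (Finset.univ.sup' Finset.univ_nonempty
      (fun w => Real.logb 2 (p w / q w))), ?_, ?_⟩
  · exact le_max_left _ _
  · have : ∀ w : α, ¬ (max 0 (Finset.univ.sup' Finset.univ_nonempty
        (fun w => Real.logb 2 (p w / q w))) < Real.logb 2 (p w / q w)) := by
      intro w
      exact not_lt.2 (le_max_of_le_right (Finset.le_sup' (fun w => Real.logb 2 (p w / q w)) (Finset.mem_univ w)))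
    simp only [this, if_false]
    simpa using hε.le

lemma Sset_bddBelow {α : Type*} [Fintype α] (ε : ℝ) (p q : α → ℝ) :
    BddBelow (Sset ε p q) := ⟨0, fun _ hx => hx.1⟩

lemma mem_Sset_of_le {α : Type*} [Fintype α] {ε : ℝ} {p q : α → ℝ}
    (hp : ∀ w, 0 ≤ p w) {a b : ℝ} (ha : a ∈ Sset ε p q) (hab : a ≤ b) :
    b ∈ Sset ε p q := by
  classical
  refine ⟨ha.1.trans hab, le_trans ?_ ha.2⟩
  apply Finset.sum_le_sum
  intro w _
  by_cases h : b < Real.logb 2 (p w / q w)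
  · rw [if_pos h, if_pos (lt_of_le_of_lt hab h)]
  · rw [if_neg h]
    split <;> [exact hp w; exact le_rfl]

lemma Ds_nonneg {α : Type*} [Fintype α] [Nonempty α] {ε : ℝ} (hε : 0 < ε)
    (p q : α → ℝ) : 0 ≤ Ds ε p q :=
  le_csInf (Sset_nonempty hε p q) fun _ hb => hb.1

lemma Ds_le_of_mem {α : Type*} [Fintype α] {ε : ℝ} {p q : α → ℝ} {a : ℝ}
    (ha : a ∈ Sset ε p q) : Ds ε p q ≤ a :=
  csInf_le (Sset_bddBelow ε p q) ha

open Classical in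
/-- For a point mass input, the joint divergence equals the conditional one. -/
lemma Ds_pointmass {X Y : Type*} [Fintype X] [Fintype Y]
    (W : X → Y → ℝ) (q : Y → ℝ) (ε : ℝ) (x0 : X) :
    Ds ε (fun z : X × Y => (if z.1 = x0 then (1:ℝ) else 0) * W z.1 z.2)
      (fun z => (if z.1 = x0 then (1:ℝ) else 0) * q z.2) = Ds ε (W x0) q := by
  classical
  rw [Ds_eq_sInf, Ds_eq_sInf]
  congr 1
  ext a
  rw [mem_Sset, mem_Sset]
  have hsum : (∑ z : X × Y, if a < Real.logb 2
        (((if z.1 = x0 then (1:ℝ) else 0) * W z.1 z.2) /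
          ((if z.1 = x0 then (1:ℝ) else 0) * q z.2))
        then (if z.1 = x0 then (1:ℝ) else 0) * W z.1 z.2 else 0)
      = ∑ w, if a < Real.logb 2 (W x0 w / q w) then W x0 w else 0 := by
    rw [Fintype.sum_prod_type]
    rw [Finset.sum_eq_single x0]
    · simp
    · intro x _ hx
      simp [hx]
    · simp
  rw [hsum]

open Classical in
lemma pointmass_isPMF {X : Type*} [Fintype X] (x0 : X) :
    IsPMF (fun x : X => if x = x0 then (1:ℝ) else 0) := by
  constructor
  · intro x; simp only []; split <;> norm_num
  · simp

lemma joint_Ds_le {X Y : Type*} [Fintype X] [Fintype Y] [Nonempty X] [Nonempty Y]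
    (W : X → Y → ℝ) (hW : ∀ x, IsPMF (W x))
    (q : Y → ℝ) {ε : ℝ} (hε : 0 < ε)
    (p : X → ℝ) (hp : IsPMF p) :
    Ds ε (fun z : X × Y => p z.1 * W z.1 z.2) (fun z => p z.1 * q z.2) ≤
      ⨆ x, Ds ε (W x) q := by
  classical
  set M := ⨆ x, Ds ε (W x) q with hM
  have hbdd : BddAbove (Set.range fun x => Ds ε (W x) q) :=
    (Set.finite_range _).bddAbove
  have hMx : ∀ x, Ds ε (W x) q ≤ M := fun x => le_ciSup hbdd x
  have hM0 : 0 ≤ M :=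
    le_trans (Ds_nonneg hε (W (Classical.arbitrary X)) q) (hMx _)
  refine le_of_forall_pos_le_add ?_
  intro δ hδ
  have hmemx : ∀ x, M + δ ∈ Sset ε (W x) q := by
    intro x
    have h1 : Ds ε (W x) q < M + δ := lt_of_le_of_lt (hMx x) (by linarith)
    obtain ⟨b, hb, hblt⟩ := exists_lt_of_csInf_lt (Sset_nonempty hε (W x) q) h1
    exact mem_Sset_of_le (hW x).1 hb hblt.le
  apply Ds_le_of_mem
  refine ⟨by linarith, ?_⟩
  rw [Fintype.sum_prod_type]
  have hle : ∀ x : X, (∑ y, if M + δ < Real.logb 2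
        ((p x * W x y) / (p x * q y)) then p x * W x y else 0) ≤ p x * ε := by
    intro x
    by_cases hx : p x = 0
    · simp [hx]
    · have hx' : p x ≠ 0 := hx
      have hratio : ∀ y, (p x * W x y) / (p x * q y) = W x y / q y := by
        intro y; rw [mul_div_mul_left _ _ hx']
      calc (∑ y, if M + δ < Real.logb 2 ((p x * W x y) / (p x * q y))
              then p x * W x y else 0)
          = p x * ∑ y, if M + δ < Real.logb 2 (W x y / q y)
              then W x y else 0 := by
            rw [Finset.mul_sum]
            refine Finset.sum_congr rfl fun y _ => ?_
            rw [hratio y, mul_ite, mul_zero]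
        _ ≤ p x * ε :=
            mul_le_mul_of_nonneg_left (hmemx x).2 (hp.1 x)
  calc (∑ x, ∑ y, if M + δ < Real.logb 2 ((p x * W x y) / (p x * q y))
          then p x * W x y else 0)
      ≤ ∑ x, p x * ε := Finset.sum_le_sum fun x _ => hle x
    _ = ε := by rw [← Finset.sum_mul, hp.2, one_mul]

/-- `sup_p D_{s+}^ε(p·W ‖ p × q) = max_x D_{s+}^ε(W(·|x) ‖ q)`. -/
theorem sup_ds_eq_max_ds
    {X Y : Type*} [Fintype X] [Fintype Y] [Nonempty X] [Nonempty Y]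
    (W : X → Y → ℝ) (hW : ∀ x, IsPMF (W x))
    (q : Y → ℝ) (hq : IsPMF q)
    (ε : ℝ) (hε : ε ∈ Set.Ioo (0:ℝ) 1) :
    sSup {d : ℝ | ∃ p : X → ℝ, IsPMF p ∧
        d = Ds ε (fun z : X × Y => p z.1 * W z.1 z.2)
              (fun z => p z.1 * q z.2)} =
      ⨆ x, Ds ε (W x) q := by
  classical
  obtain ⟨hε0, _⟩ := hε
  have hmem : ∀ x : X, Ds ε (W x) q ∈ {d : ℝ | ∃ p : X → ℝ, IsPMF p ∧
      d = Ds ε (fun z : X × Y => p z.1 * W z.1 z.2) (fun z => p z.1 * q z.2)} :=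
    fun x => ⟨fun x' => if x' = x then 1 else 0, pointmass_isPMF x,
      (Ds_pointmass W q ε x).symm⟩
  have hub : (⨆ x, Ds ε (W x) q) ∈
      upperBounds {d : ℝ | ∃ p : X → ℝ, IsPMF p ∧
        d = Ds ε (fun z : X × Y => p z.1 * W z.1 z.2) (fun z => p z.1 * q z.2)} := by
    rintro d ⟨p, hp, rfl⟩
    exact joint_Ds_le W hW q hε0 p hp
  apply le_antisymm
  · exact csSup_le ⟨_, hmem (Classical.arbitrary X)⟩ hub
  · exact ciSup_le fun x => le_csSup ⟨_, hub⟩ (hmem x)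

end
end

section
/- (Blahut–Arimoto convergence rate for multipartite common information.) Let W be a broadcast channel from finite X to Y₁ × ⋯ × Y_K, and define C̃(W) := max_{p ∈ P(X)} I(X : Y₁ : ⋯ : Y_K)_{p·W} where I(X:Y₁:⋯:Y_K) := D(p_{XY₁⋯Y_K} ‖ p_X × p_{Y₁} × ⋯ × p_{Y_K}). Starting from the uniform distribution p^{(0)} on X and using the update p^{(t)}(x) ∝ p^{(t−1)}(x)·exp(D(W(·|x) ‖ p^{(t−1)}_{Y₁} × ⋯ × p^{(t−1)}_{Y_K}) / K), the estimate C̃(n) after n iterations satisfies |C̃(W) − C̃(n)| ≤ K log|X| / n. -/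
open scoped BigOperators

noncomputable section

/-- Kullback–Leibler divergence (base 2). -/
noncomputable def KL {α : Type*} [Fintype α] (p q : α → ℝ) : ℝ :=
  ∑ a, p a * Real.logb 2 (p a / q a)


/-!
Write `D_b(x) = D(W(·|x) ‖ ∏ᵢ b_{Yᵢ})`. The identity
`∑ₓ p(x) D_b(x) = I(p) + ∑ᵢ D(p_{Yᵢ} ‖ b_{Yᵢ})` and Gibbs' inequality make `∑ₓ p(x) D_b(x)` an
upper bound for `I(p)` that is tight at `b = p`. A Blahut–Arimoto step `p' ∝ p · exp(D_p / K)` with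
normaliser `Z` satisfies `∑ₓ q(x) D_p(x) = K (D(q‖p) - D(q‖p')) + K log Z` for every input
distribution `q`. Together with Jensen (`I(p) ≤ K log Z`) and data processing
(`D(p'_{Yᵢ} ‖ p_{Yᵢ}) ≤ D(p' ‖ p)`) this gives `I(p) ≤ K log Z ≤ I(p')` and
`I(q) - I(p') ≤ K (D(q‖p) - D(q‖p'))`. Telescoping over `n` steps, with `I` increasing along the
iterates and `D(q ‖ uniform) ≤ log |X|`, yields `n (I(q) - I(p⁽ⁿ⁾)) ≤ K log |X|`.
-/

namespace BlahutArimoto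

open Finset Real

section Divergence

variable {α β : Type*} [Fintype α]

def klNat (p q : α → ℝ) : ℝ :=
  ∑ a, p a * log (p a / q a)

theorem KL_eq_klNat_div_log_two (p q : α → ℝ) : KL p q = klNat p q / log 2 := by
  simp only [KL, klNat, logb, sum_div, mul_div_assoc]

theorem two_rpow_KL_div (p q : α → ℝ) (c : ℝ) :
    (2 : ℝ) ^ (KL p q / c) = exp (klNat p q / c) := by
  rw [rpow_def_of_pos two_pos, KL_eq_klNat_div_log_two]
  congr 1
  field_simp

theorem klNat_self (p : α → ℝ) : klNat p p = 0 := by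
  simp [klNat]

theorem sub_le_mul_log_div {a b : ℝ} (ha : 0 ≤ a) (hb : 0 ≤ b) (hba : b = 0 → a = 0) :
    a - b ≤ a * log (a / b) := by
  rcases ha.eq_or_lt with rfl | ha
  · simpa using hb
  have hb : 0 < b := hb.lt_of_ne' fun h => ha.ne' (hba h)
  have := mul_le_mul_of_nonneg_left (one_sub_inv_le_log_of_pos (div_pos ha hb)) ha.le
  rwa [inv_div, mul_sub, mul_one, mul_div_cancel₀ _ ha.ne'] at this

theorem klNat_nonneg {p q : α → ℝ} (hp : ∀ a, 0 ≤ p a) (hq : ∀ a, 0 ≤ q a)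
    (hqp : ∀ a, q a = 0 → p a = 0) (hsum : ∑ a, q a ≤ ∑ a, p a) : 0 ≤ klNat p q :=
  calc 0 ≤ ∑ a, (p a - q a) := by rw [sum_sub_distrib]; linarith
    _ ≤ klNat p q := sum_le_sum fun a _ => sub_le_mul_log_div (hp a) (hq a) (hqp a)

/-- The log-sum inequality. -/
theorem sum_mul_log_sum_div_sum_le_klNat {p q : α → ℝ} (hp : ∀ a, 0 ≤ p a) (hq : ∀ a, 0 ≤ q a)
    (hqp : ∀ a, q a = 0 → p a = 0) :
    (∑ a, p a) * log ((∑ a, p a) / ∑ a, q a) ≤ klNat p q := by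
  rcases (sum_nonneg fun a _ => hp a).eq_or_lt with hP | hP
  · have hp0 : ∀ a, p a = 0 := fun a =>
      (sum_eq_zero_iff_of_nonneg fun a _ => hp a).1 hP.symm a (mem_univ a)
    simp [klNat, hp0]
  have hQ : 0 < ∑ a, q a := by
    refine (sum_nonneg fun a _ => hq a).lt_of_ne fun hQ => hP.ne' ?_
    exact sum_eq_zero fun a _ =>
      hqp a ((sum_eq_zero_iff_of_nonneg fun a _ => hq a).1 hQ.symm a (mem_univ a))
  set c := (∑ a, p a) / ∑ a, q a
  have hc : 0 < c := div_pos hP hQ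
  -- Gibbs' inequality against `q` rescaled to the mass of `p`
  have hgibbs := klNat_nonneg (q := fun a => c * q a) hp (fun a => mul_nonneg hc.le (hq a))
    (fun a h => hqp a ((mul_eq_zero.1 h).resolve_left hc.ne'))
    (by rw [← mul_sum, div_mul_cancel₀ _ hQ.ne'])
  have hterm : ∀ a, p a * log (p a / (c * q a)) = p a * log (p a / q a) - p a * log c := by
    intro a
    rcases (hp a).eq_or_lt with h | h
    · simp [← h]
    have hqa : 0 < q a := (hq a).lt_of_ne' fun h0 => h.ne' (hqp a h0)
    rw [mul_comm c, ← div_div, log_div (by positivity) hc.ne']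
    ring
  simp only [klNat, hterm, sum_sub_distrib, ← sum_mul] at hgibbs
  simp only [klNat]
  linarith

theorem klNat_uniform_le {q : α → ℝ} (hq : IsPMF q) :
    klNat q (fun _ => 1 / Fintype.card α) ≤ log (Fintype.card α) :=
  calc klNat q (fun _ => 1 / Fintype.card α) ≤ ∑ a, q a * log (Fintype.card α) := by
        refine sum_le_sum fun a _ => ?_
        rcases (hq.1 a).eq_or_lt with h | h
        · simp [← h]
        have hcard : (0 : ℝ) < Fintype.card α := Nat.cast_pos.2 (Fintype.card_pos_iff.2 ⟨a⟩)
        have hq1 : q a ≤ 1 := hq.2 ▸ single_le_sum (fun b _ => hq.1 b) (mem_univ a)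
        rw [div_div_eq_mul_div, div_one, log_mul h.ne' hcard.ne', mul_add]
        linarith [mul_nonpos_of_nonneg_of_nonpos h.le (log_nonpos (hq.1 a) hq1)]
    _ = log (Fintype.card α) := by rw [← sum_mul, hq.2, one_mul]

def channelOutput (p : α → ℝ) (ch : α → β → ℝ) (b : β) : ℝ :=
  ∑ a, p a * ch a b

variable {p q : α → ℝ} {ch : α → β → ℝ}

theorem channelOutput_nonneg (hp : ∀ a, 0 ≤ p a) (hch : ∀ a b, 0 ≤ ch a b) (b : β) :
    0 ≤ channelOutput p ch b :=
  sum_nonneg fun a _ => mul_nonneg (hp a) (hch a b)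

theorem mul_le_channelOutput (hp : ∀ a, 0 ≤ p a) (hch : ∀ a b, 0 ≤ ch a b) (a : α) (b : β) :
    p a * ch a b ≤ channelOutput p ch b :=
  single_le_sum (f := fun a => p a * ch a b) (fun a _ => mul_nonneg (hp a) (hch a b))
    (mem_univ a)

theorem sum_channelOutput_mul [Fintype β] (p : α → ℝ) (ch : α → β → ℝ) (g : β → ℝ) :
    ∑ b, channelOutput p ch b * g b = ∑ a, p a * ∑ b, ch a b * g b := by
  simp only [channelOutput, sum_mul, mul_sum, mul_assoc]
  exact sum_comm

theorem sum_channelOutput [Fintype β] (p : α → ℝ) (hch : ∀ a, ∑ b, ch a b = 1) :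
    ∑ b, channelOutput p ch b = ∑ a, p a := by
  simpa [hch] using sum_channelOutput_mul p ch 1

theorem klNat_channelOutput_nonneg [Fintype β] (hp : ∀ a, 0 ≤ p a) (hq : ∀ a, 0 < q a)
    (hpq : ∑ a, p a = ∑ a, q a) (hch : ∀ a b, 0 ≤ ch a b) (hch1 : ∀ a, ∑ b, ch a b = 1) :
    0 ≤ klNat (channelOutput p ch) (channelOutput q ch) := by
  refine klNat_nonneg (channelOutput_nonneg hp hch) (channelOutput_nonneg (fun a => (hq a).le) hch)
    (fun b hb => sum_eq_zero fun a _ => ?_) (by rw [sum_channelOutput _ hch1,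
      sum_channelOutput _ hch1, hpq])
  have := (sum_eq_zero_iff_of_nonneg fun a _ => mul_nonneg (hq a).le (hch a b)).1 hb a (mem_univ a)
  rw [(mul_eq_zero.1 this).resolve_left (hq a).ne', mul_zero]

theorem klNat_channelOutput_le [Fintype β] (hp : ∀ a, 0 ≤ p a) (hq : ∀ a, 0 < q a)
    (hch : ∀ a b, 0 ≤ ch a b) (hch1 : ∀ a, ∑ b, ch a b = 1) :
    klNat (channelOutput p ch) (channelOutput q ch) ≤ klNat p q := by
  have hterm : ∀ a b, p a * ch a b * log (p a * ch a b / (q a * ch a b)) =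
      ch a b * (p a * log (p a / q a)) := by
    intro a b
    rcases (hch a b).eq_or_lt with h | h
    · simp [← h]
    rw [mul_div_mul_right _ _ h.ne']
    ring
  calc klNat (channelOutput p ch) (channelOutput q ch)
      ≤ ∑ b, klNat (fun a => p a * ch a b) (fun a => q a * ch a b) :=
        sum_le_sum fun b _ => sum_mul_log_sum_div_sum_le_klNat
          (fun a => mul_nonneg (hp a) (hch a b)) (fun a => mul_nonneg (hq a).le (hch a b))
          fun a h => by rw [(mul_eq_zero.1 h).resolve_left (hq a).ne', mul_zero]
    _ = klNat p q := by
        simp only [klNat, hterm]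
        rw [sum_comm]
        simp only [← sum_mul, hch1, one_mul]

end Divergence

section Pushforward

variable {β γ : Type*} [Fintype β] [DecidableEq γ]

def pushforward (f : β → γ) (q : β → ℝ) (c : γ) : ℝ :=
  ∑ b, if f b = c then q b else 0

theorem sum_pushforward_mul [Fintype γ] (f : β → γ) (q : β → ℝ) (g : γ → ℝ) :
    ∑ c, pushforward f q c * g c = ∑ b, q b * g (f b) := by
  simp only [pushforward, sum_mul, ite_mul, zero_mul]
  rw [sum_comm]
  simp

theorem pushforward_nonneg {q : β → ℝ} (hq : ∀ b, 0 ≤ q b) (f : β → γ) (c : γ) :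
    0 ≤ pushforward f q c :=
  sum_nonneg fun b _ => by split_ifs <;> simp [hq b]

theorem le_pushforward {q : β → ℝ} (hq : ∀ b, 0 ≤ q b) (f : β → γ) (b : β) :
    q b ≤ pushforward f q (f b) := by
  unfold pushforward
  simpa using single_le_sum (f := fun b' => if f b' = f b then q b' else 0)
    (fun b' _ => by split_ifs <;> simp [hq b']) (mem_univ b)

theorem sum_pushforward [Fintype γ] (f : β → γ) (q : β → ℝ) :
    ∑ c, pushforward f q c = ∑ b, q b := by
  simpa using sum_pushforward_mul f q 1

end Pushforward

section BroadcastChannel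

variable {X ι : Type*} {Y : ι → Type*} [Fintype ι] [DecidableEq ι]
  [∀ i, Fintype (Y i)] [∀ i, DecidableEq (Y i)] (W : X → (∀ i, Y i) → ℝ)

def marginalChannel (i : ι) (x : X) : Y i → ℝ :=
  pushforward (fun y => y i) (W x)

theorem marginalChannel_nonneg {W : X → (∀ i, Y i) → ℝ} (hW : ∀ x, IsPMF (W x)) (i : ι) (x : X)
    (yi : Y i) : 0 ≤ marginalChannel W i x yi :=
  pushforward_nonneg (hW x).1 _ yi

theorem sum_marginalChannel {W : X → (∀ i, Y i) → ℝ} (hW : ∀ x, IsPMF (W x)) (i : ι) (x : X) :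
    ∑ yi, marginalChannel W i x yi = 1 :=
  (sum_pushforward _ _).trans (hW x).2

variable [Fintype X]

def outputMarginal (p : X → ℝ) (i : ι) : Y i → ℝ :=
  channelOutput p (marginalChannel W i)

def productOutput (p : X → ℝ) (y : ∀ i, Y i) : ℝ :=
  ∏ i, outputMarginal W p i (y i)

/-- The multipartite mutual information `I(X:Y₁:⋯:Y_K)_{p·W}` in nats. -/
def multiMutualInfo (p : X → ℝ) : ℝ :=
  ∑ x, p x * klNat (W x) (productOutput W p)

theorem KL_joint_eq_multiMutualInfo (p : X → ℝ) :
    KL (fun z : X × (∀ i, Y i) => p z.1 * W z.1 z.2) (fun z => p z.1 * productOutput W p z.2) =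
      multiMutualInfo W p / log 2 := by
  rw [KL_eq_klNat_div_log_two]
  congr 1
  simp only [klNat, multiMutualInfo, Fintype.sum_prod_type, mul_sum]
  refine sum_congr rfl fun x _ => sum_congr rfl fun y _ => ?_
  rcases eq_or_ne (p x) 0 with h | h
  · simp [h]
  rw [mul_div_mul_left _ _ h, mul_assoc]

theorem sum_outputMarginal_mul (p : X → ℝ) (i : ι) (g : Y i → ℝ) :
    ∑ yi, outputMarginal W p i yi * g yi = ∑ x, p x * ∑ y, W x y * g (y i) := by
  simp only [outputMarginal, sum_channelOutput_mul, marginalChannel, sum_pushforward_mul]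

variable {W}

theorem outputMarginal_pos (hW : ∀ x, IsPMF (W x)) {p : X → ℝ} (hp : ∀ x, 0 ≤ p x) {x : X}
    {y : ∀ i, Y i} (hpx : 0 < p x) (hWxy : 0 < W x y) (i : ι) : 0 < outputMarginal W p i (y i) :=
  calc 0 < p x * W x y := mul_pos hpx hWxy
    _ ≤ p x * marginalChannel W i x (y i) :=
      mul_le_mul_of_nonneg_left (le_pushforward (hW x).1 _ y) (hp x)
    _ ≤ outputMarginal W p i (y i) := mul_le_channelOutput hp (marginalChannel_nonneg hW i) x _

theorem log_div_productOutput (hW : ∀ x, IsPMF (W x)) {p b : X → ℝ} (hp : ∀ x, 0 ≤ p x)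
    (hb : ∀ x, 0 < b x) {x : X} {y : ∀ i, Y i} (hpx : 0 < p x) (hWxy : 0 < W x y) :
    log (W x y / productOutput W b y) = log (W x y / productOutput W p y) +
      ∑ i, log (outputMarginal W p i (y i) / outputMarginal W b i (y i)) := by
  have hmp := outputMarginal_pos hW hp hpx hWxy
  have hmb := outputMarginal_pos hW (fun x => (hb x).le) (hb x) hWxy
  simp only [productOutput]
  rw [log_div hWxy.ne' (prod_pos fun i _ => hmb i).ne',
    log_div hWxy.ne' (prod_pos fun i _ => hmp i).ne', log_prod fun i _ => (hmb i).ne',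
    log_prod fun i _ => (hmp i).ne']
  simp only [log_div (hmp _).ne' (hmb _).ne', sum_sub_distrib]
  ring

theorem sum_mul_klNat_productOutput (hW : ∀ x, IsPMF (W x)) {p b : X → ℝ} (hp : ∀ x, 0 ≤ p x)
    (hb : ∀ x, 0 < b x) :
    ∑ x, p x * klNat (W x) (productOutput W b) =
      multiMutualInfo W p + ∑ i, klNat (outputMarginal W p i) (outputMarginal W b i) := by
  set g : ∀ i, Y i → ℝ := fun i yi => log (outputMarginal W p i yi / outputMarginal W b i yi)
  have hpoint : ∀ x y, p x * (W x y * log (W x y / productOutput W b y)) =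
      p x * (W x y * log (W x y / productOutput W p y)) + ∑ i, p x * (W x y * g i (y i)) := by
    intro x y
    rcases (hp x).eq_or_lt with hx | hx
    · simp [← hx]
    rcases ((hW x).1 y).eq_or_lt with hy | hy
    · simp [← hy]
    rw [log_div_productOutput hW hp hb hx hy, ← mul_sum, ← mul_sum]
    ring
  have hmarginals : ∑ i, klNat (outputMarginal W p i) (outputMarginal W b i) =
      ∑ x, ∑ y, ∑ i, p x * (W x y * g i (y i)) :=
    calc ∑ i, klNat (outputMarginal W p i) (outputMarginal W b i)
        = ∑ i, ∑ x, ∑ y, p x * (W x y * g i (y i)) :=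
          sum_congr rfl fun i _ => (sum_outputMarginal_mul W p i (g i)).trans (by simp only [mul_sum])
      _ = ∑ x, ∑ y, ∑ i, p x * (W x y * g i (y i)) := by
          rw [sum_comm]
          exact sum_congr rfl fun x _ => sum_comm
  rw [hmarginals]
  simp only [multiMutualInfo, klNat, mul_sum, hpoint, sum_add_distrib]

end BroadcastChannel
section Iteration

variable {X ι : Type*} {Y : ι → Type*} [Fintype X] [Fintype ι] [DecidableEq ι]
  [∀ i, Fintype (Y i)] [∀ i, DecidableEq (Y i)] (W : X → (∀ i, Y i) → ℝ)

def baWeight (p : X → ℝ) (x : X) : ℝ :=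
  exp (klNat (W x) (productOutput W p) / Fintype.card ι)

def baNormalizer (p : X → ℝ) : ℝ :=
  ∑ x, p x * baWeight W p x

def baUpdate (p : X → ℝ) (x : X) : ℝ :=
  p x * baWeight W p x / baNormalizer W p

def baIterate : ℕ → X → ℝ
  | 0 => fun _ => 1 / Fintype.card X
  | t + 1 => baUpdate W (baIterate t)

variable {W} {p : X → ℝ}

theorem multiMutualInfo_le_mul_log_baNormalizer [Nonempty ι] (hp : IsPMF p) :
    multiMutualInfo W p ≤ Fintype.card ι * log (baNormalizer W p) := by
  have hjensen := strictConcaveOn_log_Ioi.concaveOn.le_map_sum (t := univ) (w := p)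
    (p := baWeight W p) (fun x _ => hp.1 x) hp.2 (fun x _ => exp_pos _)
  simp only [smul_eq_mul] at hjensen
  calc multiMutualInfo W p = Fintype.card ι * ∑ x, p x * log (baWeight W p x) := by
        simp only [multiMutualInfo, baWeight, log_exp, mul_sum]
        refine sum_congr rfl fun x _ => ?_
        field_simp
    _ ≤ Fintype.card ι * log (baNormalizer W p) :=
        mul_le_mul_of_nonneg_left hjensen (Nat.cast_nonneg _)

variable [Nonempty X]

theorem baNormalizer_pos (hp : ∀ x, 0 < p x) : 0 < baNormalizer W p :=
  sum_pos (fun x _ => mul_pos (hp x) (exp_pos _)) univ_nonempty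

theorem baUpdate_pos (hp : ∀ x, 0 < p x) (x : X) : 0 < baUpdate W p x :=
  div_pos (mul_pos (hp x) (exp_pos _)) (baNormalizer_pos hp)

theorem sum_baUpdate (hp : ∀ x, 0 < p x) : ∑ x, baUpdate W p x = 1 := by
  simp only [baUpdate, ← sum_div]
  exact div_self (baNormalizer_pos hp).ne'

theorem log_baUpdate (hp : ∀ x, 0 < p x) (x : X) :
    log (baUpdate W p x) =
      log (p x) + klNat (W x) (productOutput W p) / Fintype.card ι - log (baNormalizer W p) := by
  rw [baUpdate, baWeight, log_div (mul_pos (hp x) (exp_pos _)).ne' (baNormalizer_pos hp).ne',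
    log_mul (hp x).ne' (exp_pos _).ne', log_exp]

theorem baIterate_pos (t : ℕ) (x : X) : 0 < baIterate W t x := by
  induction t generalizing x with
  | zero => exact one_div_pos.2 (Nat.cast_pos.2 Fintype.card_pos)
  | succ t ih => exact baUpdate_pos ih x

theorem sum_baIterate (t : ℕ) : ∑ x, baIterate W t x = 1 := by
  cases t with
  | zero => simp [baIterate]
  | succ t => exact sum_baUpdate (baIterate_pos t)

theorem isPMF_baIterate (t : ℕ) : IsPMF (baIterate W t) :=
  ⟨fun x => (baIterate_pos t x).le, sum_baIterate t⟩

variable [Nonempty ι]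

theorem sum_mul_klNat_productOutput_eq (hp : ∀ x, 0 < p x) {q : X → ℝ} (hq : ∀ x, 0 ≤ q x)
    (hq1 : ∑ x, q x = 1) :
    ∑ x, q x * klNat (W x) (productOutput W p) =
      Fintype.card ι * (klNat q p - klNat q (baUpdate W p)) +
        Fintype.card ι * log (baNormalizer W p) := by
  have hK : (Fintype.card ι : ℝ) ≠ 0 := Nat.cast_ne_zero.2 Fintype.card_ne_zero
  have hterm : ∀ x, q x * log (q x / p x) - q x * log (q x / baUpdate W p x) =
      q x * klNat (W x) (productOutput W p) / Fintype.card ι - q x * log (baNormalizer W p) := by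
    intro x
    rcases (hq x).eq_or_lt with h | h
    · simp [← h]
    rw [log_div h.ne' (hp x).ne', log_div h.ne' (baUpdate_pos hp x).ne', log_baUpdate hp]
    ring
  have hdiff : klNat q p - klNat q (baUpdate W p) =
      (∑ x, q x * klNat (W x) (productOutput W p)) / Fintype.card ι - log (baNormalizer W p) := by
    rw [klNat, klNat, ← sum_sub_distrib, sum_congr rfl fun x _ => hterm x, sum_sub_distrib,
      sum_div, ← sum_mul, hq1, one_mul]
  rw [hdiff]
  field_simp
  ring

theorem mul_log_baNormalizer_le (hW : ∀ x, IsPMF (W x)) (hp : ∀ x, 0 < p x) :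
    Fintype.card ι * log (baNormalizer W p) ≤ multiMutualInfo W (baUpdate W p) := by
  set p' := baUpdate W p
  have hp' : ∀ x, 0 < p' x := baUpdate_pos hp
  have hsplit := sum_mul_klNat_productOutput_eq (W := W) hp (fun x => (hp' x).le) (sum_baUpdate hp)
  rw [klNat_self, sub_zero] at hsplit
  have hdpi : ∑ i, klNat (outputMarginal W p' i) (outputMarginal W p i) ≤
      Fintype.card ι * klNat p' p :=
    calc ∑ i, klNat (outputMarginal W p' i) (outputMarginal W p i) ≤ ∑ _i : ι, klNat p' p :=
          sum_le_sum fun i _ => klNat_channelOutput_le (fun x => (hp' x).le) hp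
            (marginalChannel_nonneg hW i) (sum_marginalChannel hW i)
      _ = Fintype.card ι * klNat p' p := by rw [sum_const, card_univ, nsmul_eq_mul]
  linarith [sum_mul_klNat_productOutput hW (fun x => (hp' x).le) hp]

theorem multiMutualInfo_sub_le (hW : ∀ x, IsPMF (W x)) (hp : ∀ x, 0 < p x) (hp1 : ∑ x, p x = 1)
    {q : X → ℝ} (hq : IsPMF q) :
    multiMutualInfo W q - multiMutualInfo W (baUpdate W p) ≤
      Fintype.card ι * (klNat q p - klNat q (baUpdate W p)) := by
  have hgibbs : 0 ≤ ∑ i, klNat (outputMarginal W q i) (outputMarginal W p i) :=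
    sum_nonneg fun i _ => klNat_channelOutput_nonneg hq.1 hp (hq.2.trans hp1.symm)
      (marginalChannel_nonneg hW i) (sum_marginalChannel hW i)
  linarith [sum_mul_klNat_productOutput hW hq.1 hp, sum_mul_klNat_productOutput_eq (W := W) hp hq.1 hq.2,
    mul_log_baNormalizer_le hW hp]

theorem monotone_multiMutualInfo_baIterate (hW : ∀ x, IsPMF (W x)) :
    Monotone fun t => multiMutualInfo W (baIterate W t) :=
  monotone_nat_of_le_succ fun t =>
    (multiMutualInfo_le_mul_log_baNormalizer (isPMF_baIterate t)).trans
      (mul_log_baNormalizer_le hW (baIterate_pos t))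

theorem mul_sub_multiMutualInfo_baIterate_le (hW : ∀ x, IsPMF (W x)) {q : X → ℝ} (hq : IsPMF q) (n : ℕ) :
    n * (multiMutualInfo W q - multiMutualInfo W (baIterate W n)) ≤
      Fintype.card ι * log (Fintype.card X) := by
  have hstep : ∀ t ∈ range n, multiMutualInfo W q - multiMutualInfo W (baIterate W n) ≤
      Fintype.card ι * (klNat q (baIterate W t) - klNat q (baIterate W (t + 1))) := fun t ht =>
    (sub_le_sub_left (monotone_multiMutualInfo_baIterate hW (mem_range.1 ht)) _).trans
      (multiMutualInfo_sub_le hW (baIterate_pos t) (sum_baIterate t) hq)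
  have hfirst : klNat q (baIterate W 0) ≤ log (Fintype.card X) := klNat_uniform_le hq
  have hlast : 0 ≤ klNat q (baIterate W n) :=
    klNat_nonneg hq.1 (fun x => (baIterate_pos n x).le)
      (fun x h => absurd h (baIterate_pos n x).ne') (by rw [hq.2, sum_baIterate])
  calc n * (multiMutualInfo W q - multiMutualInfo W (baIterate W n))
      = ∑ _t ∈ range n, (multiMutualInfo W q - multiMutualInfo W (baIterate W n)) := by
        rw [sum_const, card_range, nsmul_eq_mul]
    _ ≤ ∑ t ∈ range n,
          Fintype.card ι * (klNat q (baIterate W t) - klNat q (baIterate W (t + 1))) :=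
        sum_le_sum hstep
    _ = Fintype.card ι * (klNat q (baIterate W 0) - klNat q (baIterate W n)) := by
        rw [← mul_sum, sum_range_sub']
    _ ≤ Fintype.card ι * log (Fintype.card X) :=
        mul_le_mul_of_nonneg_left (by linarith) (Nat.cast_nonneg _)

theorem multiMutualInfo_le_baIterate_add (hW : ∀ x, IsPMF (W x)) {q : X → ℝ} (hq : IsPMF q)
    {n : ℕ} (hn : 0 < n) :
    multiMutualInfo W q ≤
      multiMutualInfo W (baIterate W n) + Fintype.card ι * log (Fintype.card X) / n := by
  rw [← sub_le_iff_le_add', le_div_iff₀ (Nat.cast_pos.2 hn), mul_comm]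
  exact mul_sub_multiMutualInfo_baIterate_le hW hq n

end Iteration

theorem abs_sSup_sub_le_of_mem {s : Set ℝ} {a B : ℝ} (ha : a ∈ s) (hB : ∀ c ∈ s, c ≤ a + B) :
    |sSup s - a| ≤ B := by
  have hle : sSup s ≤ a + B := csSup_le ⟨a, ha⟩ hB
  have hge : a ≤ sSup s := le_csSup ⟨a + B, hB⟩ ha
  rw [abs_of_nonneg (sub_nonneg.2 hge)]
  linarith

end BlahutArimoto

open BlahutArimoto

open Classical in
/-- Blahut–Arimoto convergence rate for the multipartite common information:
starting from the uniform input distribution and using the update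
`p^{(t)}(x) ∝ p^{(t-1)}(x)·2^{D(W(·|x) ‖ ∏ᵢ p^{(t-1)}_{Y_i})/K}`, the
estimate after `n` iterations is within `K log|X| / n` of
`C̃(W) = max_p I(X:Y₁:⋯:Y_K)`. -/
theorem blahut_arimoto_convergence
    {K : ℕ} (hK : 0 < K) {X : Type*} (Y : Fin K → Type*)
    [Fintype X] [Nonempty X] [∀ i, Fintype (Y i)] [∀ i, DecidableEq (Y i)]
    (W : X → (∀ i, Y i) → ℝ) (hW : ∀ x, IsPMF (W x))
    -- the `i`-th output marginal induced by an input distribution `p`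
    (marg : (X → ℝ) → ∀ i, Y i → ℝ)
    (hmarg : ∀ (p : X → ℝ) i (yi : Y i),
      marg p i yi = ∑ x, p x * ∑ y : ∀ j, Y j, if y i = yi then W x y else 0)
    -- the multipartite mutual information `I(X:Y₁:⋯:Y_K)` under input `p`
    (I : (X → ℝ) → ℝ)
    (hI : ∀ p : X → ℝ,
      I p = KL (fun z : X × (∀ i, Y i) => p z.1 * W z.1 z.2)
              (fun z => p z.1 * ∏ i, marg p i (z.2 i)))
    -- the multipartite common information `C̃(W)`
    (Ctilde : ℝ)
    (hC : Ctilde = sSup {c : ℝ | ∃ p : X → ℝ, IsPMF p ∧ c = I p})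
    -- the Blahut–Arimoto iterates
    (pseq : ℕ → X → ℝ)
    (h0 : ∀ x, pseq 0 x = 1 / (Fintype.card X : ℝ))
    (hrec : ∀ t x, pseq (t + 1) x =
      pseq t x * (2:ℝ) ^ (KL (W x) (fun y => ∏ i, marg (pseq t) i (y i)) / K) /
        ∑ x', pseq t x' *
          (2:ℝ) ^ (KL (W x') (fun y => ∏ i, marg (pseq t) i (y i)) / K)) :
    ∀ n : ℕ, 0 < n →
      |Ctilde - I (pseq n)| ≤ K * Real.logb 2 (Fintype.card X) / n := by
  intro n hn
  have : Nonempty (Fin K) := ⟨⟨0, hK⟩⟩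
  obtain rfl : marg = outputMarginal W := by
    funext p i yi
    exact hmarg p i yi
  obtain rfl : pseq = baIterate W := by
    funext t
    induction t with
    | zero => funext x; exact h0 x
    | succ t ih =>
      funext x
      simp only [hrec, ih, two_rpow_KL_div, baIterate, baUpdate, baNormalizer, baWeight,
        Fintype.card_fin]
      rfl
  have hbits : ∀ p, I p = multiMutualInfo W p / Real.log 2 := fun p =>
    (hI p).trans (KL_joint_eq_multiMutualInfo W p)
  subst hC
  refine abs_sSup_sub_le_of_mem ⟨_, isPMF_baIterate n, rfl⟩ ?_
  rintro _ ⟨q, hq, rfl⟩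
  have hnats := multiMutualInfo_le_baIterate_add hW hq hn
  rw [Fintype.card_fin] at hnats
  calc I q ≤ (multiMutualInfo W (baIterate W n) + K * Real.log (Fintype.card X) / n) /
        Real.log 2 := by
        rw [hbits]
        gcongr
    _ = I (baIterate W n) + K * Real.logb 2 (Fintype.card X) / n := by
        rw [hbits, Real.logb]
        ring
end
end
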